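/- arXiv:1707.03342 — 2 statements merged into one kernel-verified Lean document; each statement's English description precedes it below -/
import Mathlib

section
/- Let α < 0 < β, 0 < ε < 8/(β−α), and suppose k ∈ ℤ and p < q satisfy ε(k + 1/4) ≤ p ≤ ε(k + 3/4) ≤ q ≤ ε(k + 5/4) and ℓ := q − p < ε. Set ℓ_β := ε(k + 3/4) − p, ℓ_α := q − ε(k + 3/4), and v := (α ℓ_α + β ℓ_β)/ℓ. Then the function n(x) := 1 + ∫_p^x (v − g(s/ε)) ds satisfies n(q) = 1 and −1 ≤ n(x) ≤ 1 for every x ∈ [p,q]; in particular the edge [p,q] with endpoint values n(p) = n(q) = 1 is calibrable with velocity v = (α ℓ_α + β ℓ_β)/(ℓ_α + ℓ_β). -/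
open MeasureTheory Set

/-- The 1-periodic forcing term: `α` within distance `1/4` of the integers, `β` otherwise. -/
noncomputable def g (α β x : ℝ) : ℝ := if |x - (round x : ℝ)| ≤ 1/4 then α else β

/-- The edge `[p,q]` with endpoint values `a`, `b` is calibrated with velocity `v` by the
Lipschitz field `n : [p,q] → [-1,1]` satisfying `n' = v - g(·/ε)` a.e. on `[p,q]`. -/
def Calibrates (α β ε p q a b v : ℝ) (n : ℝ → ℝ) : Prop :=
  (∃ K : NNReal, LipschitzOnWith K n (Icc p q)) ∧
  (∀ x ∈ Icc p q, n x ∈ Icc (-1 : ℝ) 1) ∧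
  n p = a ∧ n q = b ∧
  ∀ᵐ x ∂(volume.restrict (Icc p q)), HasDerivAt n (v - g α β (x / ε)) x

/-!
On `[p, q]` the forcing `g(·/ε)` equals `β` left of `m = ε(k + 3/4)` and `α` right of it, so
`n` is the tent function `1 + (min x m - p)(v - β) + (max x m - m)(v - α)`: it decreases
from `1` down to `n m = 1 - (β - α) ℓ_α ℓ_β / ℓ`, and the choice of `v` brings it back to `1`
at `q`. Since `ℓ_α ℓ_β ≤ ℓ² / 4` and `ℓ < ε < 8 / (β - α)`, the dip stays above `-1`.
-/

lemma measurable_g (α β : ℝ) : Measurable (g α β) := by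
  have hround : Measurable fun x : ℝ => ((round x : ℤ) : ℝ) := by
    simp only [round_eq]
    exact measurable_from_top.comp (measurable_id.add_const _).floor
  exact Measurable.ite (measurableSet_le (measurable_id.sub hround).abs measurable_const)
    measurable_const measurable_const

lemma norm_sub_g_le (α β v x : ℝ) : ‖v - g α β x‖ ≤ ‖v - α‖ + ‖v - β‖ := by
  unfold g
  split_ifs <;> simp

lemma g_eq_beta_of_mem_Ioo {α β t : ℝ} {k : ℤ} (ht : t ∈ Ioo ((k : ℝ) + 1/4) (k + 3/4)) :
    g α β t = β := by
  refine if_neg (not_le.2 ?_)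
  obtain hj | hj := le_or_gt (round t) k
  · have : ((round t : ℤ) : ℝ) ≤ k := by exact_mod_cast hj
    exact lt_of_lt_of_le (by linarith [ht.1]) (le_abs_self _)
  · have : (k : ℝ) + 1 ≤ round t := by exact_mod_cast hj
    exact lt_of_lt_of_le (by linarith [ht.2]) (neg_le_abs _)

lemma g_eq_alpha_of_mem_Ioo {α β t : ℝ} {k : ℤ} (ht : t ∈ Ioo ((k : ℝ) + 3/4) (k + 5/4)) :
    g α β t = α := by
  refine if_pos ((round_le t (k + 1)).trans ?_)
  rw [abs_le]
  push_cast
  constructor <;> linarith [ht.1, ht.2]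

lemma div_mem_Ioo_of_mem_Ioo_mul {ε a b s : ℝ} (hε : 0 < ε) (hs : s ∈ Ioo (ε * a) (ε * b)) :
    s / ε ∈ Ioo a b :=
  ⟨(lt_div_iff₀' hε).2 hs.1, (div_lt_iff₀' hε).2 hs.2⟩

lemma measurable_sub_g_div (α β v ε : ℝ) : Measurable fun s => v - g α β (s / ε) :=
  measurable_const.sub ((measurable_g α β).comp (measurable_id.div_const ε))

lemma eqOn_sub_g_div_beta {α β v ε : ℝ} {k : ℤ} (hε : 0 < ε) :
    EqOn (fun s => v - g α β (s / ε)) (fun _ => v - β) (Ioo (ε * (k + 1/4)) (ε * (k + 3/4))) :=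
  fun _ hs => by simp only [g_eq_beta_of_mem_Ioo (div_mem_Ioo_of_mem_Ioo_mul hε hs)]

lemma eqOn_sub_g_div_alpha {α β v ε : ℝ} {k : ℤ} (hε : 0 < ε) :
    EqOn (fun s => v - g α β (s / ε)) (fun _ => v - α) (Ioo (ε * (k + 3/4)) (ε * (k + 5/4))) :=
  fun _ hs => by simp only [g_eq_alpha_of_mem_Ioo (div_mem_Ioo_of_mem_Ioo_mul hε hs)]

section Primitive

variable {E : Type*} [NormedAddCommGroup E] {f : ℝ → E}

lemma intervalIntegrable_of_norm_le {C : ℝ} (hf : AEStronglyMeasurable f)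
    (hC : ∀ x, ‖f x‖ ≤ C) (a b : ℝ) : IntervalIntegrable f volume a b :=
  (intervalIntegrable_const (c := C)).mono_fun' hf.restrict (ae_of_all _ hC)

variable [NormedSpace ℝ E]

lemma lipschitzWith_integral_of_norm_le {C : NNReal} (hf : AEStronglyMeasurable f)
    (hC : ∀ x, ‖f x‖ ≤ C) (a : ℝ) : LipschitzWith C fun x => ∫ s in a..x, f s := by
  refine LipschitzWith.of_dist_le_mul fun x y => ?_
  rw [dist_eq_norm, intervalIntegral.integral_interval_sub_left
    (intervalIntegrable_of_norm_le hf hC a x) (intervalIntegrable_of_norm_le hf hC a y),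
    Real.dist_eq]
  exact intervalIntegral.norm_integral_le_of_norm_le_const fun s _ => hC s

variable [CompleteSpace E]

lemma hasDerivAt_integral_of_eqOn_Ioo {a b p x : ℝ} {c : E} (hf : AEStronglyMeasurable f)
    (hint : IntervalIntegrable f volume p x) (h : EqOn f (fun _ => c) (Ioo a b))
    (hx : x ∈ Ioo a b) : HasDerivAt (fun y => ∫ s in p..y, f s) (f x) x :=
  intervalIntegral.integral_hasDerivAt_right hint hf.stronglyMeasurableAtFilter
    ((continuousOn_const.congr h).continuousAt (Ioo_mem_nhds hx.1 hx.2))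

lemma integral_two_step_from_jump {a m b z : ℝ} {c₁ c₂ : E}
    (h₁ : EqOn f (fun _ => c₁) (Ioo a m)) (h₂ : EqOn f (fun _ => c₂) (Ioo m b))
    (hz : z ∈ Icc a b) : ∫ s in m..z, f s = (min z m - m) • c₁ + (max z m - m) • c₂ := by
  rcases le_total z m with hzm | hmz
  · have h : EqOn f (fun _ => c₁) (Ioo z m) := fun s hs => h₁ ⟨hz.1.trans_lt hs.1, hs.2⟩
    rw [intervalIntegral.integral_symm, intervalIntegral.integral_congr_Ioo_of_le hzm h,
      intervalIntegral.integral_const, min_eq_left hzm, max_eq_right hzm, sub_self, zero_smul,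
      add_zero, ← neg_smul, neg_sub]
  · have h : EqOn f (fun _ => c₂) (Ioo m z) := fun s hs => h₂ ⟨hs.1, hs.2.trans_le hz.2⟩
    rw [intervalIntegral.integral_congr_Ioo_of_le hmz h, intervalIntegral.integral_const,
      min_eq_right hmz, max_eq_left hmz, sub_self, zero_smul, zero_add]

lemma integral_two_step {a m b x y : ℝ} {c₁ c₂ : E}
    (hf : ∀ x y, IntervalIntegrable f volume x y)
    (h₁ : EqOn f (fun _ => c₁) (Ioo a m)) (h₂ : EqOn f (fun _ => c₂) (Ioo m b))
    (hx : x ∈ Icc a b) (hy : y ∈ Icc a b) :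
    ∫ s in x..y, f s = (min y m - min x m) • c₁ + (max y m - max x m) • c₂ := by
  rw [← intervalIntegral.integral_interval_sub_left (hf m y) (hf m x),
    integral_two_step_from_jump h₁ h₂ hx, integral_two_step_from_jump h₁ h₂ hy]
  simp only [sub_smul]
  abel

lemma ae_hasDerivAt_integral_two_step {a m b p q : ℝ} {c₁ c₂ : E}
    (hf : AEStronglyMeasurable f) (hint : ∀ x y, IntervalIntegrable f volume x y)
    (h₁ : EqOn f (fun _ => c₁) (Ioo a m)) (h₂ : EqOn f (fun _ => c₂) (Ioo m b))
    (hap : a ≤ p) (hqb : q ≤ b) :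
    ∀ᵐ x ∂volume.restrict (Icc p q), HasDerivAt (fun y => ∫ s in p..y, f s) (f x) x := by
  rw [Measure.restrict_congr_set Ioo_ae_eq_Icc.symm]
  filter_upwards [ae_restrict_mem measurableSet_Ioo, Measure.ae_ne _ m] with x hx hxm
  rcases hxm.lt_or_gt with hxm | hmx
  · exact hasDerivAt_integral_of_eqOn_Ioo hf (hint p x) h₁ ⟨hap.trans_lt hx.1, hxm⟩
  · exact hasDerivAt_integral_of_eqOn_Ioo hf (hint p x) h₂ ⟨hmx, hx.2.trans_le hqb⟩

end Primitive

lemma weighted_mean_mem_Icc {α β lα lβ : ℝ} (hαβ : α ≤ β) (hlα : 0 ≤ lα) (hlβ : 0 ≤ lβ)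
    (hl : 0 < lα + lβ) : (α * lα + β * lβ) / (lα + lβ) ∈ Icc α β := by
  rw [mem_Icc, le_div_iff₀ hl, div_le_iff₀ hl]
  constructor <;> nlinarith

lemma mul_weighted_mean_sub_add_mul_weighted_mean_sub_eq_zero {α β lα lβ : ℝ} (hl : lα + lβ ≠ 0) :
    lβ * ((α * lα + β * lβ) / (lα + lβ) - β) + lα * ((α * lα + β * lβ) / (lα + lβ) - α) = 0 := by
  field_simp
  ring

lemma neg_two_lt_mul_weighted_mean_sub {α β ε lα lβ : ℝ} (hαβ : α < β) (hlα : 0 ≤ lα)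
    (hlβ : 0 ≤ lβ) (hl : 0 < lα + lβ) (hlε : lα + lβ < ε) (hε : ε < 8 / (β - α)) :
    -2 < lβ * ((α * lα + β * lβ) / (lα + lβ) - β) := by
  have hβα : 0 < β - α := sub_pos.2 hαβ
  have hdip : lβ * ((α * lα + β * lβ) / (lα + lβ) - β) = -((β - α) * (lα * lβ)) / (lα + lβ) := by
    field_simp
    ring
  have hεβα : ε * (β - α) < 8 := (lt_div_iff₀ hβα).1 hε
  have hamgm : (β - α) * (4 * (lα * lβ)) ≤ (β - α) * (lα + lβ) ^ 2 :=
    mul_le_mul_of_nonneg_left (by linarith [four_mul_le_sq_add lα lβ]) hβα.le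
  rw [hdip, lt_div_iff₀ hl]
  nlinarith [mul_lt_mul_of_pos_left hlε (mul_pos hβα hl)]

lemma tent_mem_Icc {A B p m q x : ℝ} (hA : A ≤ 0) (hB : 0 ≤ B) (hx : x ∈ Icc p q)
    (hbal : (m - p) * A + (q - m) * B = 0) :
    (min x m - p) * A + (max x m - m) * B ∈ Icc ((m - p) * A) 0 := by
  rcases le_total x m with hxm | hmx
  · rw [min_eq_left hxm, max_eq_right hxm]
    constructor <;> nlinarith [hx.1]
  · rw [min_eq_right hmx, max_eq_left hmx]
    constructor <;> nlinarith [hx.2]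

section TwoStep

variable {f : ℝ → ℝ} {a m b p q c₁ c₂ : ℝ}

lemma integral_two_step_mem_Icc (hf : ∀ x y, IntervalIntegrable f volume x y)
    (h₁ : EqOn f (fun _ => c₁) (Ioo a m)) (h₂ : EqOn f (fun _ => c₂) (Ioo m b))
    (hap : a ≤ p) (hpm : p ≤ m) (hqb : q ≤ b) (hc₁ : c₁ ≤ 0) (hc₂ : 0 ≤ c₂)
    (hbal : (m - p) * c₁ + (q - m) * c₂ = 0) {x : ℝ} (hx : x ∈ Icc p q) :
    ∫ s in p..x, f s ∈ Icc ((m - p) * c₁) 0 := by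
  rw [integral_two_step hf h₁ h₂ ⟨hap, hx.1.trans (hx.2.trans hqb)⟩
      ⟨hap.trans hx.1, hx.2.trans hqb⟩,
    min_eq_left hpm, max_eq_right hpm, smul_eq_mul, smul_eq_mul]
  exact tent_mem_Icc hc₁ hc₂ hx hbal

lemma integral_two_step_eq_zero (hf : ∀ x y, IntervalIntegrable f volume x y)
    (h₁ : EqOn f (fun _ => c₁) (Ioo a m)) (h₂ : EqOn f (fun _ => c₂) (Ioo m b))
    (hap : a ≤ p) (hpm : p ≤ m) (hmq : m ≤ q) (hqb : q ≤ b)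
    (hbal : (m - p) * c₁ + (q - m) * c₂ = 0) : ∫ s in p..q, f s = 0 := by
  rw [integral_two_step hf h₁ h₂ ⟨hap, (hpm.trans hmq).trans hqb⟩
      ⟨hap.trans (hpm.trans hmq), hqb⟩,
    min_eq_left hpm, max_eq_right hpm, min_eq_right hmq, max_eq_left hmq, smul_eq_mul, smul_eq_mul,
    hbal]

end TwoStep

theorem stmt1 (α β ε p q : ℝ) (k : ℤ) (hα : α < 0) (hβ : 0 < β)
    (hε0 : 0 < ε) (hε : ε < 8 / (β - α)) (hpq : p < q)
    (h1 : ε * (k + 1/4) ≤ p) (h2 : p ≤ ε * (k + 3/4)) (h3 : ε * (k + 3/4) ≤ q)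
    (h4 : q ≤ ε * (k + 5/4)) (hl : q - p < ε)
    (lα lβ v : ℝ) (hlβ : lβ = ε * (k + 3/4) - p) (hlα : lα = q - ε * (k + 3/4))
    (hv : v = (α * lα + β * lβ) / (q - p))
    (n : ℝ → ℝ) (hn : n = fun x => 1 + ∫ s in p..x, (v - g α β (s / ε))) :
    n q = 1 ∧ (∀ x ∈ Icc p q, -1 ≤ n x ∧ n x ≤ 1) ∧
    Calibrates α β ε p q 1 1 v n ∧ v = (α * lα + β * lβ) / (lα + lβ) := by
  have hαβ : α < β := hα.trans hβ
  set m := ε * (k + 3/4)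
  subst hlα hlβ
  rw [← show q - m + (m - p) = q - p by ring] at hv hl
  subst hv
  have hℓ : 0 < q - m + (m - p) := by linarith
  set v := (α * (q - m) + β * (m - p)) / (q - m + (m - p))
  set f : ℝ → ℝ := fun s => v - g α β (s / ε)
  have hn' : ∀ x, n x = 1 + ∫ s in p..x, f s := fun x => by rw [hn]
  have hf_meas : AEStronglyMeasurable f := (measurable_sub_g_div α β v ε).aestronglyMeasurable
  have hf_bdd : ∀ s, ‖f s‖ ≤ ((‖v - α‖₊ + ‖v - β‖₊ : NNReal) : ℝ) := fun s => by
    simpa using norm_sub_g_le α β v (s / ε)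
  have hf_int := intervalIntegrable_of_norm_le hf_meas hf_bdd
  have hf_left : EqOn f (fun _ => v - β) (Ioo (ε * (k + 1/4)) m) := eqOn_sub_g_div_beta hε0
  have hf_right : EqOn f (fun _ => v - α) (Ioo m (ε * (k + 5/4))) := eqOn_sub_g_div_alpha hε0
  have hv_mem := weighted_mean_mem_Icc hαβ.le (sub_nonneg.2 h3) (sub_nonneg.2 h2) hℓ
  have hbal := mul_weighted_mean_sub_add_mul_weighted_mean_sub_eq_zero (α := α) (β := β) hℓ.ne'
  have hdip := neg_two_lt_mul_weighted_mean_sub hαβ (sub_nonneg.2 h3) (sub_nonneg.2 h2) hℓ hl hε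
  have hbdd : ∀ x ∈ Icc p q, -1 ≤ n x ∧ n x ≤ 1 := fun x hx => by
    have := integral_two_step_mem_Icc hf_int hf_left hf_right h1 h2 h4
      (sub_nonpos.2 hv_mem.2) (sub_nonneg.2 hv_mem.1) hbal hx
    rw [hn']
    constructor <;> linarith [this.1, this.2]
  have hnq : n q = 1 := by
    rw [hn', integral_two_step_eq_zero hf_int hf_left hf_right h1 h2 h3 h4 hbal, add_zero]
  have hderiv : ∀ᵐ x ∂volume.restrict (Icc p q), HasDerivAt n (f x) x :=
    (ae_hasDerivAt_integral_two_step hf_meas hf_int hf_left hf_right h1 h4).mono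
      fun x hx => hn ▸ hx.const_add 1
  have hlip := (LipschitzWith.const 1).add (lipschitzWith_integral_of_norm_le hf_meas hf_bdd p)
  refine ⟨hnq, hbdd, ⟨⟨_, (hn ▸ hlip).lipschitzOnWith⟩, hbdd, by simp [hn'], hnq, hderiv⟩, rfl⟩
end

section
/- Let α < 0 < β, 0 < ε < 8/(β−α), and let k₁, k ∈ ℤ and p, q ∈ ℝ with ε(k₁ + 1/4) < p < ε(k₁ + 3/4) (so p lies in the open β-phase of g_ε) and q = ε(k + 3/4) with q > ε(k₁ + 5/4). Set ℓ := q − p, σ := ε(k₁ + 3/4) − p ∈ (0, ε/2), ℓ* := q − ε(k₁ + 5/4), σ* := (ε/2)·((β−α)(ℓ* + ε/2) − 4)/((β−α)(ℓ* − ε/2) + 4), and v := −2/ℓ + (α+β)/2 + ((β−α)/(2ℓ))σ, and assume (β−α)(ℓ* + ε/2 + 2σ) > 4. Then there exists a Lipschitz function n : [p,q] → [−1,1] with n(p) = 1, n(q) = −1 and n'(x) = v − g(x/ε) for almost every x ∈ [p,q] if and only if σ ≥ σ*. -/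
/-!
Since `g α β` has an explicit Lipschitz primitive `G = gPrimitive α β`, affine of slope `α` on the
`α`-phase and of slope `β` on the `β`-phase, the function `F x = v x - ε G(x/ε)` is a primitive of
`v - g(·/ε)`, and a Lipschitz function with a.e. vanishing derivative is constant: the only
candidate field is `x ↦ F x - F q - 1`. The choice of `v` makes it equal to `1` at `p`. It then
decreases through the `β`-phase, increases through the following `α`-phase up to the interface
`ε (k₁ + 5/4)`, and beyond it never exceeds its value there because `v ≤ (α + β)/2`. So the field
stays in `[-1, 1]` iff its value at `ε (k₁ + 5/4)` is at most `1`, which rearranges to `σ* ≤ σ`.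
-/

open MeasureTheory Set

open Filter Topology

section Round

variable {𝕜 : Type*} [Field 𝕜] [LinearOrder 𝕜] [IsStrictOrderedRing 𝕜] [FloorRing 𝕜]

theorem abs_sub_round_le_abs_sub_intCast (x : 𝕜) (n : ℤ) : |x - round x| ≤ |x - n| := by
  rcases lt_or_ge |x - n| (1 / 2) with h | h
  · obtain ⟨h₁, h₂⟩ := abs_lt.1 h
    rw [round_eq_iff (n := n) |>.2 ⟨by linarith, by linarith⟩]
  · exact (abs_sub_round x).trans h

theorem abs_sub_round_eq_of_abs_sub_le {x : 𝕜} {n : ℤ} (h : |x - n| ≤ 1 / 2) :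
    |x - round x| = |x - n| := by
  refine (abs_sub_round_le_abs_sub_intCast x n).antisymm ?_
  rcases eq_or_ne (round x) n with hr | hr
  · rw [hr]
  · have h₁ : (1 : 𝕜) ≤ |(round x : 𝕜) - n| := by
      exact_mod_cast Int.one_le_abs (sub_ne_zero.2 hr)
    have h₂ : |(round x : 𝕜) - n| ≤ |x - round x| + |x - n| := by
      simpa only [abs_sub_comm (round x : 𝕜) x] using abs_sub_le (round x : 𝕜) x n
    linarith

end Round

theorem lipschitzWith_abs_sub_round : LipschitzWith 1 fun x : ℝ => |x - round x| :=
  LipschitzWith.of_le_add fun x y => by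
    calc |x - round x| ≤ |x - round y| := abs_sub_round_le_abs_sub_intCast x _
      _ ≤ |x - y| + |y - round y| := abs_sub_le x y _
      _ = |y - round y| + dist x y := by rw [Real.dist_eq, add_comm]

section Phases

variable {α β : ℝ}

theorem g_of_abs_sub_le {n : ℤ} {s : ℝ} (hs : |s - n| ≤ 1 / 4) : g α β s = α :=
  if_pos ((abs_sub_round_le_abs_sub_intCast s n).trans hs)

theorem g_of_mem_Ioo {n : ℤ} {s : ℝ} (hs : s ∈ Ioo (n + 1 / 4 : ℝ) (n + 3 / 4)) :
    g α β s = β := by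
  refine if_neg (not_le.2 ?_)
  rcases le_or_gt (round s) n with h | h
  · have : (round s : ℝ) ≤ n := by exact_mod_cast h
    rw [abs_of_pos] <;> linarith [hs.1]
  · have : (n : ℝ) + 1 ≤ round s := by exact_mod_cast h
    rw [abs_of_neg] <;> linarith [hs.2]

/-- With `t = s - 1/4`, the sawtooth `|t - round t|` has slope `-1` on the `α`-phase
`|s - n| ≤ 1/4` and `+1` on the `β`-phase. -/
noncomputable def gPrimitive (α β s : ℝ) : ℝ :=
  (α + β) / 2 * s + (β - α) / 2 * |s - 1 / 4 - round (s - 1 / 4)|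

theorem gPrimitive_of_abs_sub_le {n : ℤ} {s : ℝ} (hs : |s - n| ≤ 1 / 4) :
    gPrimitive α β s = α * s + (β - α) / 2 * (n + 1 / 4) := by
  obtain ⟨h₁, h₂⟩ := abs_le.1 hs
  rw [gPrimitive, abs_sub_round_eq_of_abs_sub_le (n := n) (abs_le.2 ⟨by linarith, by linarith⟩),
    abs_of_nonpos (by linarith)]
  ring

theorem gPrimitive_of_mem_Icc {n : ℤ} {s : ℝ} (hs : s ∈ Icc (n + 1 / 4 : ℝ) (n + 3 / 4)) :
    gPrimitive α β s = β * s - (β - α) / 2 * (n + 1 / 4) := by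
  obtain ⟨h₁, h₂⟩ := hs
  rw [gPrimitive, abs_sub_round_eq_of_abs_sub_le (n := n) (abs_le.2 ⟨by linarith, by linarith⟩),
    abs_of_nonneg (by linarith)]
  ring

theorem gPrimitive_intCast_add_one_quarter (n : ℤ) :
    gPrimitive α β (n + 1 / 4) = (α + β) / 2 * (n + 1 / 4) := by
  rw [gPrimitive_of_mem_Icc (n := n) ⟨le_rfl, by linarith⟩]
  ring

theorem gPrimitive_intCast_add_three_quarters (n : ℤ) :
    gPrimitive α β (n + 3 / 4) = (α + β) / 2 * (n + 3 / 4) + (β - α) / 4 := by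
  rw [gPrimitive_of_mem_Icc (n := n) ⟨by linarith, le_rfl⟩]
  ring

theorem mul_le_gPrimitive (hαβ : α ≤ β) (s : ℝ) : (α + β) / 2 * s ≤ gPrimitive α β s := by
  have := mul_nonneg (by linarith : 0 ≤ (β - α) / 2) (abs_nonneg (s - 1 / 4 - round (s - 1 / 4)))
  rw [gPrimitive]
  linarith

theorem gPrimitive_le (hαβ : α ≤ β) (s : ℝ) :
    gPrimitive α β s ≤ (α + β) / 2 * s + (β - α) / 4 := by
  have := mul_le_mul_of_nonneg_left (abs_sub_round (s - 1 / 4)) (by linarith : 0 ≤ (β - α) / 2)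
  rw [gPrimitive]
  linarith

theorem lipschitzWith_gPrimitive (α β : ℝ) :
    LipschitzWith (‖(α + β) / 2‖₊ + ‖(β - α) / 2‖₊) (gPrimitive α β) := by
  have h := (lipschitzWith_smul ((α + β) / 2)).add ((lipschitzWith_smul ((β - α) / 2)).comp
    (lipschitzWith_abs_sub_round.comp (LipschitzWith.id.sub (LipschitzWith.const (1 / 4 : ℝ)))))
  rwa [one_mul, add_zero, mul_one] at h

theorem hasDerivAt_gPrimitive {s : ℝ} (hs : ∀ j : ℤ, s ≠ j / 2 - 1 / 4) :
    HasDerivAt (gPrimitive α β) (g α β s) s := by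
  set n := ⌊s + 1 / 4⌋
  have h₁ : (n : ℝ) < s + 1 / 4 :=
    (Int.floor_le _).lt_of_ne fun h => hs (2 * n) (by push_cast; linarith)
  have h₂ : s + 1 / 4 < n + 1 := Int.lt_floor_add_one _
  rcases lt_or_gt_of_ne fun h : s + 1 / 4 = n + 1 / 2 => hs (2 * n + 1) (by push_cast; linarith)
    with h | h
  · have hG : gPrimitive α β =ᶠ[𝓝 s] fun y => α * y + (β - α) / 2 * (n + 1 / 4) := by
      filter_upwards [Ioo_mem_nhds (by linarith : (n - 1 / 4 : ℝ) < s)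
        (by linarith : s < n + 1 / 4)] with y hy
      exact gPrimitive_of_abs_sub_le (abs_le.2 ⟨by linarith [hy.1], by linarith [hy.2]⟩)
    rw [g_of_abs_sub_le (n := n) (abs_le.2 ⟨by linarith, by linarith⟩)]
    exact (((hasDerivAt_id s).const_mul α).add_const _).congr_of_eventuallyEq hG |>.congr_deriv
      (mul_one α)
  · have hG : gPrimitive α β =ᶠ[𝓝 s] fun y => β * y - (β - α) / 2 * (n + 1 / 4) := by
      filter_upwards [Ioo_mem_nhds (by linarith : (n + 1 / 4 : ℝ) < s)
        (by linarith : s < n + 3 / 4)] with y hy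
      exact gPrimitive_of_mem_Icc ⟨hy.1.le, hy.2.le⟩
    rw [g_of_mem_Ioo (n := n) ⟨by linarith, by linarith⟩]
    exact (((hasDerivAt_id s).const_mul β).sub_const _).congr_of_eventuallyEq hG |>.congr_deriv
      (mul_one β)

end Phases

theorem AbsolutelyContinuousOnInterval.sub_eq_sub_of_ae_hasDerivAt {f g f' : ℝ → ℝ} {a b : ℝ}
    (hf : AbsolutelyContinuousOnInterval f a b) (hg : AbsolutelyContinuousOnInterval g a b)
    (hf' : ∀ᵐ x, x ∈ uIcc a b → HasDerivAt f (f' x) x)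
    (hg' : ∀ᵐ x, x ∈ uIcc a b → HasDerivAt g (f' x) x) :
    f b - f a = g b - g a := by
  obtain ⟨C, hC⟩ := (hf.sub hg).const_of_ae_hasDerivAt_zero <| by
    filter_upwards [hf', hg'] with x hfx hgx hx
    simpa using (hfx hx).sub (hgx hx)
  have ha := hC a left_mem_uIcc
  have hb := hC b right_mem_uIcc
  simp only [Pi.sub_apply] at ha hb
  linarith

section Primitive

variable {α β ε v : ℝ}

noncomputable def calibPrimitive (α β ε v x : ℝ) : ℝ := v * x - ε * gPrimitive α β (x / ε)

theorem lipschitzWith_calibPrimitive : ∃ K, LipschitzWith K (calibPrimitive α β ε v) := by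
  have h := (lipschitzWith_smul v).sub ((lipschitzWith_smul ε).comp
    ((lipschitzWith_gPrimitive α β).comp (lipschitzWith_smul ε⁻¹)))
  refine ⟨_, (funext fun x => ?_ : (fun x => _) = calibPrimitive α β ε v) ▸ h⟩
  simp [calibPrimitive, div_eq_inv_mul]

theorem ae_hasDerivAt_calibPrimitive (hε : ε ≠ 0) :
    ∀ᵐ x, HasDerivAt (calibPrimitive α β ε v) (v - g α β (x / ε)) x := by
  filter_upwards [(countable_range fun j : ℤ => ε * ((j : ℝ) / 2 - 1 / 4)).ae_notMem volume]
    with x hx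
  have hs : ∀ j : ℤ, x / ε ≠ j / 2 - 1 / 4 := fun j hj =>
    hx ⟨j, show ε * _ = x by rw [← hj, mul_div_cancel₀ _ hε]⟩
  have hG := (((hasDerivAt_gPrimitive (α := α) (β := β) hs).comp x
    ((hasDerivAt_id x).div_const ε)).const_mul ε)
  exact (((hasDerivAt_id x).const_mul v).sub hG).congr_deriv (by field_simp)

theorem exists_calibrates_iff (hε : ε ≠ 0) {p q a b : ℝ} (hpq : p ≤ q) :
    (∃ n, Calibrates α β ε p q a b v n) ↔
      (∀ x ∈ Icc p q, calibPrimitive α β ε v x - calibPrimitive α β ε v q + b ∈ Icc (-1 : ℝ) 1) ∧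
        calibPrimitive α β ε v p - calibPrimitive α β ε v q + b = a := by
  set F := calibPrimitive α β ε v
  obtain ⟨K, hF⟩ := lipschitzWith_calibPrimitive (α := α) (β := β) (ε := ε) (v := v)
  have hF' := ae_hasDerivAt_calibPrimitive (α := α) (β := β) (v := v) hε
  constructor
  · rintro ⟨n, ⟨L, hn⟩, hbd, hnp, hnq, hn'⟩
    rw [ae_restrict_iff' measurableSet_Icc] at hn'
    have hnF : ∀ x ∈ Icc p q, n x = F x - F q + b := by
      intro x hx
      have hsub : uIcc x q ⊆ Icc p q := by
        rw [uIcc_of_le hx.2]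
        exact Icc_subset_Icc_left hx.1
      have := (hn.mono hsub).absolutelyContinuousOnInterval.sub_eq_sub_of_ae_hasDerivAt
        hF.lipschitzOnWith.absolutelyContinuousOnInterval
        (hn'.mono fun y hy hyI => hy (hsub hyI)) (hF'.mono fun y hy _ => hy)
      linarith
    refine ⟨fun x hx => hnF x hx ▸ hbd x hx, ?_⟩
    rw [← hnF p (left_mem_Icc.2 hpq), hnp]
  · rintro ⟨hbd, hp⟩
    refine ⟨fun x => F x - F q + b, ⟨K, LipschitzWith.lipschitzOnWith ?_⟩, hbd, hp, by simp,
      ae_restrict_of_ae (hF'.mono fun x hx => (hx.sub_const _).add_const _)⟩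
    exact LipschitzWith.of_dist_le_mul fun x y => by
      simpa only [dist_add_right, dist_sub_right] using hF.dist_le_mul x y

theorem div_mem_Icc_of_mem_Icc_mul (hε : 0 < ε) {a b x : ℝ} (hx : x ∈ Icc (ε * a) (ε * b)) :
    x / ε ∈ Icc a b :=
  ⟨(le_div_iff₀' hε).2 hx.1, (div_le_iff₀' hε).2 hx.2⟩

theorem calibPrimitive_sub_of_alpha_phase (hε : 0 < ε) {n : ℤ} {x y : ℝ}
    (hx : x ∈ Icc (ε * (n - 1 / 4)) (ε * (n + 1 / 4)))
    (hy : y ∈ Icc (ε * (n - 1 / 4)) (ε * (n + 1 / 4))) :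
    calibPrimitive α β ε v y - calibPrimitive α β ε v x = (v - α) * (y - x) := by
  obtain ⟨hx₁, hx₂⟩ := div_mem_Icc_of_mem_Icc_mul hε hx
  obtain ⟨hy₁, hy₂⟩ := div_mem_Icc_of_mem_Icc_mul hε hy
  simp only [calibPrimitive]
  rw [gPrimitive_of_abs_sub_le (n := n) (abs_le.2 ⟨by linarith, by linarith⟩),
    gPrimitive_of_abs_sub_le (n := n) (abs_le.2 ⟨by linarith, by linarith⟩)]
  field_simp
  ring

theorem calibPrimitive_sub_of_beta_phase (hε : 0 < ε) {n n' : ℤ} {x y : ℝ}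
    (hx : x ∈ Icc (ε * (n + 1 / 4)) (ε * (n + 3 / 4)))
    (hy : y ∈ Icc (ε * (n' + 1 / 4)) (ε * (n' + 3 / 4))) :
    calibPrimitive α β ε v y - calibPrimitive α β ε v x =
      (v - β) * (y - x) + ε * (β - α) / 2 * (n' - n) := by
  simp only [calibPrimitive]
  rw [gPrimitive_of_mem_Icc (div_mem_Icc_of_mem_Icc_mul hε hx),
    gPrimitive_of_mem_Icc (div_mem_Icc_of_mem_Icc_mul hε hy)]
  field_simp
  ring

theorem calibPrimitive_le_of_quarter_le (hε : 0 < ε) (hαβ : α ≤ β) (hv : v ≤ (α + β) / 2)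
    (n : ℤ) {y : ℝ} (hy : ε * (n + 1 / 4) ≤ y) :
    calibPrimitive α β ε v y ≤ calibPrimitive α β ε v (ε * (n + 1 / 4)) := by
  have hG := mul_le_mul_of_nonneg_left (mul_le_gPrimitive hαβ (y / ε)) hε.le
  have hy' : ε * ((α + β) / 2 * (y / ε)) = (α + β) / 2 * y := by field_simp
  have := mul_le_mul_of_nonneg_right (sub_nonneg.2 hv) (sub_nonneg.2 hy)
  simp only [calibPrimitive]
  rw [mul_div_cancel_left₀ _ hε.ne', gPrimitive_intCast_add_one_quarter]
  linarith

theorem calibPrimitive_le_of_le_three_quarters (hε : 0 < ε) (hαβ : α ≤ β)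
    (hv : v ≤ (α + β) / 2) (n : ℤ) {x : ℝ} (hx : x ≤ ε * (n + 3 / 4)) :
    calibPrimitive α β ε v (ε * (n + 3 / 4)) ≤ calibPrimitive α β ε v x := by
  have hG := mul_le_mul_of_nonneg_left (gPrimitive_le hαβ (x / ε)) hε.le
  have hx' : ε * ((α + β) / 2 * (x / ε)) = (α + β) / 2 * x := by field_simp
  have := mul_le_mul_of_nonneg_right (sub_nonneg.2 hv) (sub_nonneg.2 hx)
  simp only [calibPrimitive]
  rw [mul_div_cancel_left₀ _ hε.ne', gPrimitive_intCast_add_three_quarters]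
  linarith

theorem calibPrimitive_le_max (hε : 0 < ε) (hαv : α ≤ v) (hvm : v ≤ (α + β) / 2) {k₁ : ℤ}
    {p x : ℝ} (hp : ε * (k₁ + 1 / 4) ≤ p) (hpx : p ≤ x) :
    calibPrimitive α β ε v x ≤
      max (calibPrimitive α β ε v p) (calibPrimitive α β ε v (ε * (k₁ + 5 / 4))) := by
  have hx₀ : ε * (k₁ + 5 / 4) = ε * (((k₁ + 1 : ℤ) : ℝ) + 1 / 4) := by push_cast; ring
  rcases le_total (ε * (k₁ + 5 / 4)) x with h | h
  · rw [hx₀] at h ⊢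
    exact le_max_of_le_right (calibPrimitive_le_of_quarter_le hε (by linarith) hvm _ h)
  rcases le_total (ε * (k₁ + 3 / 4)) x with h' | h'
  · have := calibPrimitive_sub_of_alpha_phase (α := α) (β := β) (v := v) hε (n := k₁ + 1)
      (x := x) (y := ε * (k₁ + 5 / 4)) ⟨by push_cast; linarith, by push_cast; linarith⟩
      ⟨by push_cast; linarith, by push_cast; linarith⟩
    have := mul_nonneg (sub_nonneg.2 hαv) (sub_nonneg.2 h)
    exact le_max_of_le_right (by linarith)
  · have := calibPrimitive_sub_of_beta_phase (α := α) (β := β) (v := v) hε (n := k₁) (n' := k₁)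
      ⟨hp, hpx.trans h'⟩ ⟨hp.trans hpx, h'⟩
    have := mul_nonneg (by linarith : 0 ≤ β - v) (sub_nonneg.2 hpx)
    exact le_max_of_le_left (by linarith)

theorem calibPrimitive_quarter_sub_three_quarters (hε : ε ≠ 0) (n n' : ℤ) :
    calibPrimitive α β ε v (ε * (n + 1 / 4)) - calibPrimitive α β ε v (ε * (n' + 3 / 4)) =
      (β - α) * ε / 4 - (v - (α + β) / 2) * (ε * (n' + 3 / 4) - ε * (n + 1 / 4)) := by
  simp only [calibPrimitive, mul_div_cancel_left₀ _ hε, gPrimitive_intCast_add_one_quarter,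
    gPrimitive_intCast_add_three_quarters]
  ring

theorem exists_calibrates_concave_iff (hε : 0 < ε) (hαv : α ≤ v) (hvm : v ≤ (α + β) / 2)
    {k₁ k : ℤ} {p q : ℝ} (hp : ε * (k₁ + 1 / 4) ≤ p) (hp₀ : p ≤ ε * (k₁ + 5 / 4))
    (hq₀ : ε * (k₁ + 5 / 4) ≤ q) (hq : q = ε * (k + 3 / 4))
    (hpq : calibPrimitive α β ε v p - calibPrimitive α β ε v q = 2) :
    (∃ n, Calibrates α β ε p q 1 (-1) v n) ↔
      calibPrimitive α β ε v (ε * (k₁ + 5 / 4)) - calibPrimitive α β ε v q ≤ 2 := by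
  rw [exists_calibrates_iff hε.ne' (hp₀.trans hq₀)]
  constructor
  · rintro ⟨hbd, -⟩
    linarith [(hbd _ ⟨hp₀, hq₀⟩).2]
  · refine fun h => ⟨fun x hx => ⟨?_, ?_⟩, by linarith⟩
    · have := calibPrimitive_le_of_le_three_quarters hε (by linarith) hvm k (hq ▸ hx.2)
      rw [← hq] at this
      linarith
    · rcases le_max_iff.1 (calibPrimitive_le_max hε hαv hvm hp hx.1) with h' | h' <;> linarith

end Primitive

theorem sigmaStar_le_iff {E ε ℓ σ c : ℝ} (hE : 0 ≤ E) (hℓ : ε / 2 ≤ ℓ) (hL : 0 < ℓ + ε / 2 + σ)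
    (hc : c * (ℓ + ε / 2 + σ) = E * σ / 2 - 2) :
    ε / 2 * (E * (ℓ + ε / 2) - 4) / (E * (ℓ - ε / 2) + 4) ≤ σ ↔ E * ε / 4 - c * ℓ ≤ 2 := by
  have hden : 0 < E * (ℓ - ε / 2) + 4 := by nlinarith
  have key : ε / 2 * (E * (ℓ + ε / 2) - 4) - σ * (E * (ℓ - ε / 2) + 4) =
      2 * (ℓ + ε / 2 + σ) * (E * ε / 4 - c * ℓ - 2) := by
    linear_combination (2 * ℓ) * hc
  rw [div_le_iff₀ hden, ← sub_nonpos, key]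
  constructor <;> intro h <;> nlinarith

theorem stmt12 (α β ε p q : ℝ) (k₁ k : ℤ) (hα : α < 0) (hβ : 0 < β)
    (hε0 : 0 < ε) (hε : ε < 8 / (β - α))
    (hp1 : ε * (k₁ + 1/4) < p) (hp2 : p < ε * (k₁ + 3/4))
    (hq : q = ε * (k + 3/4)) (hqgt : ε * (k₁ + 5/4) < q)
    (σ lstar σstar v : ℝ)
    (hσ : σ = ε * (k₁ + 3/4) - p)
    (hlstar : lstar = q - ε * (k₁ + 5/4))
    (hσstar : σstar = ε / 2 * ((β - α) * (lstar + ε / 2) - 4)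
      / ((β - α) * (lstar - ε / 2) + 4))
    (hv : v = -2 / (q - p) + (α + β) / 2 + (β - α) / (2 * (q - p)) * σ)
    (hcond : 4 < (β - α) * (lstar + ε / 2 + 2 * σ)) :
    (∃ n : ℝ → ℝ, Calibrates α β ε p q 1 (-1) v n) ↔ σstar ≤ σ := by
  have hE : 0 < β - α := by linarith
  have hEε : (β - α) * ε < 8 := by rwa [lt_div_iff₀ hE, mul_comm] at hε
  have hk : (k₁ : ℝ) + 1 ≤ k := by
    have : (k₁ : ℝ) < k := by nlinarith
    exact_mod_cast Int.add_one_le_iff.2 (by exact_mod_cast this)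
  have hls : ε / 2 ≤ lstar := by rw [hlstar, hq]; nlinarith
  have hL : q - p = lstar + ε / 2 + σ := by rw [hlstar, hσ]; ring
  have hpq : q - p ≠ 0 := by linarith
  have hc : (v - (α + β) / 2) * (lstar + ε / 2 + σ) = (β - α) * σ / 2 - 2 := by
    rw [← hL, hv]
    field_simp
    ring
  have hvm : v ≤ (α + β) / 2 := by nlinarith
  have hαv : α ≤ v := by nlinarith
  have hFp : calibPrimitive α β ε v p - calibPrimitive α β ε v q = 2 := by
    rw [← neg_sub, calibPrimitive_sub_of_beta_phase hε0 (n := k₁) (n' := k) ⟨hp1.le, hp2.le⟩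
      ⟨by linarith, hq.le⟩]
    linear_combination -hc - (v - (α + β) / 2) * hL + (β - α) / 2 * hq - (β - α) / 2 * hσ
  have hFx₀ := calibPrimitive_quarter_sub_three_quarters (α := α) (β := β) (v := v) hε0.ne'
    (k₁ + 1) k
  rw [show ε * (((k₁ + 1 : ℤ) : ℝ) + 1 / 4) = ε * (k₁ + 5 / 4) by push_cast; ring, ← hq,
    ← hlstar] at hFx₀
  rw [exists_calibrates_concave_iff hε0 hαv hvm hp1.le (by linarith) hqgt.le hq hFp, hFx₀,
    hσstar, sigmaStar_le_iff hE.le hls (by linarith) hc]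
end
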